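/- Let H and G be Hilbert algebras and f : H → G a function such that f(1) = 1 and f(a→b) ≤ f(a)→f(b) for all a,b ∈ H. Then the following are equivalent: (1) f(a→b) = f(a)→f(b) for all a,b ∈ H (i.e., f is a homomorphism); (2) for every irreducible implicative filter P of G and every irreducible implicative filter Q of H with f⁻¹(P) ⊆ Q, there exists an irreducible implicative filter F of G such that P ⊆ F and f⁻¹(F) = Q. -/

import Mathlib

/-- A Hilbert algebra `(H, →, 1)`. -/
structure HilbertAlgebra (H : Type*) where
  imp : H → H → H
  one : H
  ax1 : ∀ a b : H, imp a (imp b a) = one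
  ax2 : ∀ a b c : H, imp (imp a (imp b c)) (imp (imp a b) (imp a c)) = one
  ax3 : ∀ a b : H, imp a b = one → imp b a = one → a = b

namespace HilbertAlgebra

variable {H : Type*} (hH : HilbertAlgebra H)

/-- The natural order: `a ≤ b` iff `a → b = 1`. -/
def le (a b : H) : Prop := hH.imp a b = hH.one

/-- Implicative filter. -/
def IsImplicativeFilter (F : Set H) : Prop :=
  hH.one ∈ F ∧ ∀ a b : H, a ∈ F → hH.imp a b ∈ F → b ∈ F

/-- Irreducible implicative filter. -/
def IsIrreducible (F : Set H) : Prop :=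
  hH.IsImplicativeFilter F ∧ F ≠ Set.univ ∧
    ∀ F₁ F₂ : Set H, hH.IsImplicativeFilter F₁ → hH.IsImplicativeFilter F₂ →
      F = F₁ ∩ F₂ → (F = F₁ ∨ F = F₂)

/-- Order-ideal: nonempty, downward closed, up-directed (w.r.t. the natural order). -/
def IsOrderIdeal (I : Set H) : Prop :=
  I.Nonempty ∧ (∀ a b : H, b ∈ I → hH.le a b → a ∈ I) ∧
    ∀ a b : H, a ∈ I → b ∈ I → ∃ c ∈ I, hH.le a c ∧ hH.le b c

/-- `φ(a) = {P ∈ X(H) : a ∈ P}`. -/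
def phi (a : H) : Set (Set H) := {P | hH.IsIrreducible P ∧ a ∈ P}

/-- An upset of `X(H)` (the poset of irreducible implicative filters, ordered by `⊆`). -/
def IsUpsetX (U : Set (Set H)) : Prop :=
  (∀ P ∈ U, hH.IsIrreducible P) ∧
    ∀ P Q : Set H, P ∈ U → hH.IsIrreducible Q → P ⊆ Q → Q ∈ U

/-- The Heyting implication `U ⇒ V` on upsets of `X(H)`. -/
def impUps (U V : Set (Set H)) : Set (Set H) :=
  {P | hH.IsIrreducible P ∧ ∀ Q : Set H, hH.IsIrreducible Q → P ⊆ Q → Q ∈ U → Q ∈ V}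

/-- `FC(H)`: finite nonempty intersections of sets of the form `φ(a)`. -/
def FC : Set (Set (Set H)) :=
  {U | ∃ l : List H, l ≠ [] ∧ U = ⋂ a ∈ l, hH.phi a}

/-- `X*(H)`: implicative filters that are intersections of finitely many (at least one)
irreducible implicative filters. -/
def XStar : Set (Set H) :=
  {F | ∃ S : Set (Set H), S.Finite ∧ S.Nonempty ∧ (∀ P ∈ S, hH.IsIrreducible P) ∧ F = ⋂₀ S}

/-- `Φ(a) = {F ∈ X*(H) : a ∈ F}`. -/
def Phi (a : H) : Set (Set H) := {F | F ∈ hH.XStar ∧ a ∈ F}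

/-- An upset of `X*(H)` (ordered by `⊆`). -/
def IsUpsetXStar (U : Set (Set H)) : Prop :=
  (∀ F ∈ U, F ∈ hH.XStar) ∧
    ∀ F K : Set H, F ∈ U → K ∈ hH.XStar → F ⊆ K → K ∈ U

/-- The implication `U ⇒ V` on upsets of `X*(H)`. -/
def impUpsStar (U V : Set (Set H)) : Set (Set H) :=
  {F | F ∈ hH.XStar ∧ ∀ K : Set H, K ∈ hH.XStar → F ⊆ K → K ∈ U → K ∈ V}

/-- Homomorphism of Hilbert algebras. -/
def IsHom {G : Type*} (hG : HilbertAlgebra G) (f : H → G) : Prop :=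
  f hH.one = hG.one ∧ ∀ a b : H, f (hH.imp a b) = hG.imp (f a) (f b)

end HilbertAlgebra

/-- A Hilbert algebra with supremum: `(H, ∨)` is a join-semilattice whose induced
order has greatest element `1`, and `a → b = 1` iff `a ∨ b = b`. -/
structure HilbertSup (H : Type*) extends HilbertAlgebra H where
  sup : H → H → H
  sup_comm : ∀ a b : H, sup a b = sup b a
  sup_assoc : ∀ a b c : H, sup (sup a b) c = sup a (sup b c)
  sup_idem : ∀ a : H, sup a a = a
  sup_one : ∀ a : H, sup a one = one
  imp_eq_one_iff : ∀ a b : H, imp a b = one ↔ sup a b = b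

/-- Morphism of Hilbert algebras with supremum. -/
def HilbertSup.IsHomSup {H G : Type*} (hH : HilbertSup H) (hG : HilbertSup G)
    (f : H → G) : Prop :=
  hH.toHilbertAlgebra.IsHom hG.toHilbertAlgebra f ∧
    ∀ a b : H, f (hH.sup a b) = hG.sup (f a) (f b)

/-- An implicative semilattice: a meet-semilattice with greatest element and a binary
operation `him` such that `a ⊓ b ≤ c ↔ a ≤ him b c`. -/
class ImplicativeSemilattice (G : Type*) extends SemilatticeInf G, OrderTop G where
  him : G → G → G
  inf_le_iff_le_him : ∀ a b c : G, a ⊓ b ≤ c ↔ a ≤ him b c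


/-!
Both directions rest on a Zorn argument: a filter that is maximal among the filters disjoint
from a set `A` is irreducible as soon as any two elements of `A` have a common `→`-upper bound
in `A` modulo the filter. For a homomorphism `f`, a maximal filter `M ⊇ P` with `f⁻¹(M) ⊆ Q`
absorbs `f(Q)` (if `q ∈ Q` then `{y | f q → y ∈ M}` still pulls back into `Q`), so
`f⁻¹(M) = Q`, and irreducibility of `Q` supplies the common upper bounds in `f(Qᶜ)`.
Conversely, if `f a → f b ≰ f (a → b)`, separate by an irreducible `P`, then separate `b` from
`{x | a → x ∈ f⁻¹(P)}` by an irreducible `Q`; the filter `F` extending `P` with `f⁻¹(F) = Q`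
contains `f a` and `f a → f b`, hence `f b`, so `b ∈ Q`, a contradiction.
-/

namespace HilbertAlgebra

variable {H : Type*} (hH : HilbertAlgebra H)

theorem eq_one_of_one_imp {x : H} (h : hH.imp hH.one x = hH.one) : x = hH.one :=
  hH.ax3 x hH.one (by simpa only [h] using hH.ax1 x hH.one) h

theorem imp_one (a : H) : hH.imp a hH.one = hH.one :=
  hH.eq_one_of_one_imp (hH.ax1 hH.one a)

theorem imp_self (a : H) : hH.imp a a = hH.one := by
  have h := hH.ax2 a hH.one a
  rw [hH.ax1 a hH.one] at h
  have h' := hH.eq_one_of_one_imp h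
  rw [hH.imp_one a] at h'
  exact hH.eq_one_of_one_imp h'

theorem isImplicativeFilter_setOf_le (x : H) : hH.IsImplicativeFilter {y | hH.le x y} := by
  refine ⟨hH.imp_one x, fun a b ha hab => ?_⟩
  have h := hH.ax2 x a b
  rw [show hH.imp x (hH.imp a b) = hH.one from hab] at h
  have h' := hH.eq_one_of_one_imp h
  rw [show hH.imp x a = hH.one from ha] at h'
  exact hH.eq_one_of_one_imp h'

namespace IsImplicativeFilter

variable {hH} {F : Set H}

theorem mem_of_le (hF : hH.IsImplicativeFilter F) {a b : H} (ha : a ∈ F) (hab : hH.le a b) :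
    b ∈ F :=
  hF.2 a b ha (by rw [show hH.imp a b = hH.one from hab]; exact hF.1)

theorem setOf_imp_mem (hF : hH.IsImplicativeFilter F) (a : H) :
    hH.IsImplicativeFilter {x | hH.imp a x ∈ F} := by
  refine ⟨show hH.imp a hH.one ∈ F by rw [hH.imp_one]; exact hF.1, fun x y hx hxy => ?_⟩
  have h : hH.imp (hH.imp a x) (hH.imp a y) ∈ F := hF.mem_of_le hxy (hH.ax2 a x y)
  exact hF.2 _ _ hx h

theorem preimage {G : Type*} {hG : HilbertAlgebra G} {P : Set G}
    (hP : hG.IsImplicativeFilter P) {f : H → G} (hf1 : f hH.one = hG.one)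
    (hf2 : ∀ a b : H, hG.le (f (hH.imp a b)) (hG.imp (f a) (f b))) :
    hH.IsImplicativeFilter (f ⁻¹' P) :=
  ⟨by rw [Set.mem_preimage, hf1]; exact hP.1,
    fun a b ha hab => hP.2 _ _ ha (hP.mem_of_le hab (hf2 a b))⟩

theorem sUnion_of_isChain {c : Set (Set H)} (hc : ∀ F ∈ c, hH.IsImplicativeFilter F)
    (hchain : IsChain (· ⊆ ·) c) (hne : c.Nonempty) : hH.IsImplicativeFilter (⋃₀ c) := by
  obtain ⟨F₀, hF₀⟩ := hne
  refine ⟨⟨F₀, hF₀, (hc F₀ hF₀).1⟩, ?_⟩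
  rintro a b ⟨Fa, hFa, ha⟩ ⟨Fb, hFb, hab⟩
  rcases hchain.total hFa hFb with h | h
  · exact ⟨Fb, hFb, (hc Fb hFb).2 a b (h ha) hab⟩
  · exact ⟨Fa, hFa, (hc Fa hFa).2 a b ha (h hab)⟩

end IsImplicativeFilter

variable {hH} in
theorem IsIrreducible.exists_imp_mem {Q : Set H} (hQ : hH.IsIrreducible Q) {x₁ x₂ : H}
    (h₁ : x₁ ∉ Q) (h₂ : x₂ ∉ Q) : ∃ c, c ∉ Q ∧ hH.imp x₁ c ∈ Q ∧ hH.imp x₂ c ∈ Q := by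
  by_contra! hcon
  have hsplit : Q = {x | hH.imp x₁ x ∈ Q} ∩ {x | hH.imp x₂ x ∈ Q} := by
    refine Set.Subset.antisymm (fun x hx => ⟨?_, ?_⟩) fun c ⟨hc₁, hc₂⟩ => ?_
    · exact hQ.1.mem_of_le hx (hH.ax1 x x₁)
    · exact hQ.1.mem_of_le hx (hH.ax1 x x₂)
    · by_contra hc
      exact hcon c hc hc₁ hc₂
  have hself : ∀ x, x ∈ {y | hH.imp x y ∈ Q} := fun x =>
    show hH.imp x x ∈ Q by rw [hH.imp_self]; exact hQ.1.1
  rcases hQ.2.2 _ _ (hQ.1.setOf_imp_mem x₁) (hQ.1.setOf_imp_mem x₂) hsplit with h | h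
  · exact h₁ (h ▸ hself x₁)
  · exact h₂ (h ▸ hself x₂)

section MaximalDisjoint

variable {hH} {A : Set H}

theorem exists_maximal_disjoint {F : Set H} (hF : hH.IsImplicativeFilter F)
    (hFA : Disjoint F A) :
    ∃ M, F ⊆ M ∧ Maximal (fun M => hH.IsImplicativeFilter M ∧ Disjoint M A) M := by
  refine zorn_subset_nonempty _ (fun c hc hchain hne => ?_) F ⟨hF, hFA⟩
  refine ⟨⋃₀ c, ⟨?_, ?_⟩, fun s hs => Set.subset_sUnion_of_mem hs⟩
  · exact IsImplicativeFilter.sUnion_of_isChain (fun F hF => (hc hF).1) hchain hne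
  · exact Set.disjoint_sUnion_left.2 fun F hF => (hc hF).2

theorem mem_of_maximal_disjoint {M : Set H}
    (hM : Maximal (fun M => hH.IsImplicativeFilter M ∧ Disjoint M A) M) {z : H}
    (hz : Disjoint {y | hH.imp z y ∈ M} A) : z ∈ M := by
  have hsub : M ⊆ {y | hH.imp z y ∈ M} := fun y hy => hM.1.1.mem_of_le hy (hH.ax1 y z)
  rw [hM.eq_of_subset ⟨hM.1.1.setOf_imp_mem z, hz⟩ hsub]
  show hH.imp z z ∈ M
  rw [hH.imp_self]
  exact hM.1.1.1

theorem isIrreducible_of_maximal_disjoint {M : Set H}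
    (hM : Maximal (fun M => hH.IsImplicativeFilter M ∧ Disjoint M A) M) (hA : A.Nonempty)
    (hdir : ∀ x₁ ∈ A, ∀ x₂ ∈ A, ∃ c ∈ A, hH.imp x₁ c ∈ M ∧ hH.imp x₂ c ∈ M) :
    hH.IsIrreducible M := by
  obtain ⟨a, ha⟩ := hA
  refine ⟨hM.1.1, fun h => Set.disjoint_left.1 hM.1.2 (h ▸ Set.mem_univ a) ha, ?_⟩
  intro F₁ F₂ hF₁ hF₂ hM12
  by_contra! hne
  have meets : ∀ F, hH.IsImplicativeFilter F → M ⊆ F → M ≠ F → ∃ x ∈ F, x ∈ A :=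
    fun F hF hMF hMF' =>
      Set.not_disjoint_iff.1 fun hdisj => hMF' (hM.eq_of_subset ⟨hF, hdisj⟩ hMF)
  obtain ⟨x₁, hx₁, hx₁A⟩ := meets F₁ hF₁ (hM12 ▸ Set.inter_subset_left) hne.1
  obtain ⟨x₂, hx₂, hx₂A⟩ := meets F₂ hF₂ (hM12 ▸ Set.inter_subset_right) hne.2
  obtain ⟨c, hcA, hc₁, hc₂⟩ := hdir x₁ hx₁A x₂ hx₂A
  have hcM : c ∈ M := hM12 ▸
    ⟨hF₁.2 _ _ hx₁ (hM12.subset hc₁).1, hF₂.2 _ _ hx₂ (hM12.subset hc₂).2⟩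
  exact Set.disjoint_left.1 hM.1.2 hcM hcA

end MaximalDisjoint

theorem exists_isIrreducible_of_notMem {F : Set H} (hF : hH.IsImplicativeFilter F) {b : H}
    (hb : b ∉ F) : ∃ Q, hH.IsIrreducible Q ∧ F ⊆ Q ∧ b ∉ Q := by
  obtain ⟨M, hFM, hM⟩ := exists_maximal_disjoint hF (Set.disjoint_singleton_right.2 hb)
  refine ⟨M, isIrreducible_of_maximal_disjoint hM (Set.singleton_nonempty b) ?_, hFM,
    Set.disjoint_singleton_right.1 hM.1.2⟩
  simp only [Set.mem_singleton_iff, forall_eq, exists_eq_left, hH.imp_self, and_self]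
  exact hM.1.1.1

theorem le_of_forall_isIrreducible {x y : H}
    (h : ∀ P, hH.IsIrreducible P → x ∈ P → y ∈ P) : hH.le x y := by
  by_contra hxy
  obtain ⟨P, hP, hxP, hyP⟩ :=
    hH.exists_isIrreducible_of_notMem (hH.isImplicativeFilter_setOf_le x) hxy
  exact hyP (h P hP (hxP (hH.imp_self x)))

theorem exists_isIrreducible_preimage_eq {G : Type*} (hG : HilbertAlgebra G) {f : H → G}
    (hf : ∀ a b : H, f (hH.imp a b) = hG.imp (f a) (f b)) {P : Set G} {Q : Set H}
    (hP : hG.IsImplicativeFilter P) (hQ : hH.IsIrreducible Q) (hPQ : f ⁻¹' P ⊆ Q) :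
    ∃ F, hG.IsIrreducible F ∧ P ⊆ F ∧ f ⁻¹' F = Q := by
  have disjoint_iff : ∀ M, Disjoint M (f '' Qᶜ) ↔ f ⁻¹' M ⊆ Q := fun M => by
    rw [Set.disjoint_image_right, disjoint_compl_right_iff]
  obtain ⟨M, hPM, hM⟩ := exists_maximal_disjoint hP ((disjoint_iff P).2 hPQ)
  have hMQ : f ⁻¹' M ⊆ Q := (disjoint_iff M).1 hM.1.2
  have hQM : ∀ q ∈ Q, f q ∈ M := fun q hq =>
    mem_of_maximal_disjoint hM <| (disjoint_iff _).2 fun x hx =>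
      hQ.1.2 q x hq (hMQ (show f (hH.imp q x) ∈ M by rw [hf]; exact hx))
  have hQc : (f '' Qᶜ).Nonempty := by
    obtain ⟨x, hx⟩ := (Set.ne_univ_iff_exists_notMem Q).1 hQ.2.1
    exact ⟨f x, x, hx, rfl⟩
  refine ⟨M, isIrreducible_of_maximal_disjoint hM hQc ?_, hPM, hMQ.antisymm hQM⟩
  rintro _ ⟨x₁, hx₁, rfl⟩ _ ⟨x₂, hx₂, rfl⟩
  obtain ⟨c, hc, hc₁, hc₂⟩ := hQ.exists_imp_mem hx₁ hx₂
  exact ⟨f c, ⟨c, hc, rfl⟩, hf x₁ c ▸ hQM _ hc₁, hf x₂ c ▸ hQM _ hc₂⟩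

end HilbertAlgebra

theorem stmt_5 {H G : Type*} (hH : HilbertAlgebra H) (hG : HilbertAlgebra G) (f : H → G)
    (hf1 : f hH.one = hG.one)
    (hf2 : ∀ a b : H, hG.le (f (hH.imp a b)) (hG.imp (f a) (f b))) :
    (∀ a b : H, f (hH.imp a b) = hG.imp (f a) (f b)) ↔
      (∀ (P : Set G) (Q : Set H), hG.IsIrreducible P → hH.IsIrreducible Q → f ⁻¹' P ⊆ Q →
        ∃ F : Set G, hG.IsIrreducible F ∧ P ⊆ F ∧ f ⁻¹' F = Q) := by
  refine ⟨fun hf P Q hP hQ hPQ => hH.exists_isIrreducible_preimage_eq hG hf hP.1 hQ hPQ, ?_⟩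
  intro hext a b
  refine hG.ax3 _ _ (hf2 a b) (hG.le_of_forall_isIrreducible fun P hP hab => ?_)
  by_contra hnot
  have hfP := hP.1.preimage hf1 hf2
  obtain ⟨Q, hQ, hPQ, hbQ⟩ := hH.exists_isIrreducible_of_notMem (hfP.setOf_imp_mem a) hnot
  obtain ⟨F, hF, hPF, rfl⟩ :=
    hext P Q hP hQ fun x hx => hPQ (hfP.mem_of_le hx (hH.ax1 x a))
  have ha : f a ∈ F := hPQ (show f (hH.imp a a) ∈ P by rw [hH.imp_self, hf1]; exact hP.1.1)
  exact hbQ (hF.1.2 _ _ ha (hPF hab))
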